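/- arXiv:0809.2889 — 4 statements merged into one kernel-verified Lean document; each statement's English description precedes it below -/
import Mathlib

section
/- Let φ be a smooth real-valued function on [0,∞), let N be a positive integer, and let a₁,…,a_N be pairwise distinct positive real numbers. Assume there exist l₀ ∈ ℕ and l₁ ∈ ℕ with l₁ ≥ 1 such that the derivative φ^(l₀ + p·l₁)(0) ≠ 0 for every p = 0,…,N−1. Then the functions x ↦ φ(a₁x), …, x ↦ φ(a_N x) are linearly independent on every interval (0, ε) with ε > 0. -/
open Set

private lemma iteratedDeriv_finsum {ι : Type*} (u : Finset ι) (f : ι → ℝ → ℝ) (n : ℕ)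
    (h : ∀ j ∈ u, ContDiff ℝ n (f j)) (x : ℝ) :
    iteratedDeriv n (fun x => ∑ j ∈ u, f j x) x = ∑ j ∈ u, iteratedDeriv n (f j) x := by
  simp only [iteratedDeriv_eq_iteratedFDeriv]
  rw [iteratedFDeriv_sum h]
  simp

private lemma iteratedDeriv_zero_fun (n : ℕ) :
    iteratedDeriv n (fun _ : ℝ => (0 : ℝ)) = fun _ => (0 : ℝ) := by
  induction n with
  | zero => simp
  | succ m ih =>
    rw [iteratedDeriv_succ']
    have hd : deriv (fun _ : ℝ => (0 : ℝ)) = fun _ => (0 : ℝ) := by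
      funext x; exact deriv_const x 0
    rw [hd, ih]

private lemma iteratedDeriv_const_mul' (n : ℕ) (c : ℝ) {f : ℝ → ℝ} (hf : ContDiff ℝ n f)
    (x : ℝ) : iteratedDeriv n (fun z => c * f z) x = c * iteratedDeriv n f x := by
  rw [← iteratedDerivWithin_univ, ← iteratedDerivWithin_univ]
  exact iteratedDerivWithin_const_mul (Set.mem_univ x) uniqueDiffOn_univ c hf.contDiffWithinAt

theorem dilation_linear_independence
    (φ : ℝ → ℝ) (hφ : ContDiff ℝ (⊤ : ℕ∞) φ)
    (N : ℕ) (hN : 0 < N) (a : Fin N → ℝ)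
    (ha_pos : ∀ k, 0 < a k) (ha_inj : Function.Injective a)
    (l₀ l₁ : ℕ) (hl₁ : 1 ≤ l₁)
    (hder : ∀ p < N, iteratedDeriv (l₀ + p * l₁) φ 0 ≠ 0) :
    ∀ ε > (0 : ℝ), ∀ c : Fin N → ℝ,
      (∀ x ∈ Ioo (0 : ℝ) ε, ∑ k, c k * φ (a k * x) = 0) →
      ∀ k, c k = 0 := by
  intro ε hε c hc
  set f : ℝ → ℝ := fun x => ∑ k, c k * φ (a k * x) with hf_def
  have hφk : ∀ k : Fin N, ContDiff ℝ (⊤ : ℕ∞) (fun x => φ (a k * x)) := fun k =>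
    hφ.comp (contDiff_const.mul contDiff_id)
  have hfk : ∀ k : Fin N, ContDiff ℝ (⊤ : ℕ∞) (fun x => c k * φ (a k * x)) := fun k =>
    contDiff_const.mul (hφk k)
  have hf : ContDiff ℝ (⊤ : ℕ∞) f := ContDiff.sum fun k _ => ((hfk k).of_le (by simp))
  -- iterated derivatives of f
  have key : ∀ n : ℕ, iteratedDeriv n f 0 = ∑ k, c k * (a k ^ n * iteratedDeriv n φ 0) := by
    intro n
    rw [hf_def]
    rw [iteratedDeriv_finsum Finset.univ _ n (fun j _ => ((hfk j).of_le (by exact_mod_cast le_top))) 0]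
    refine Finset.sum_congr rfl fun k _ => ?_
    rw [iteratedDeriv_const_mul' n (c k) ((hφk k).of_le (by exact_mod_cast le_top)) 0]
    have := iteratedDeriv_comp_const_mul (n := n) (f := φ) (hφ.of_le (by exact_mod_cast le_top)) (a k)
    rw [congrFun this 0]
    norm_num
  -- iterated derivatives vanish at 0
  have hzero : ∀ n : ℕ, iteratedDeriv n f 0 = 0 := by
    intro n
    have heq : Set.EqOn f (fun _ : ℝ => (0 : ℝ)) (Ioo 0 ε) := fun x hx => hc x hx
    have hder_eq : Set.EqOn (iteratedDeriv n f) (iteratedDeriv n (fun _ : ℝ => (0 : ℝ)))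
        (Ioo 0 ε) := heq.iteratedDeriv_of_isOpen isOpen_Ioo n
    have hz := iteratedDeriv_zero_fun n
    have hcont : Continuous (iteratedDeriv n f) := hf.continuous_iteratedDeriv n
      (by exact_mod_cast le_top)
    have hcl : Set.EqOn (iteratedDeriv n f) (iteratedDeriv n (fun _ : ℝ => (0 : ℝ)))
        (closure (Ioo 0 ε)) := hder_eq.closure hcont (by rw [hz]; exact continuous_const)
    have h0 : (0 : ℝ) ∈ closure (Ioo 0 ε) := by
      rw [closure_Ioo hε.ne]
      exact ⟨le_refl 0, hε.le⟩
    have := hcl h0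
    rwa [hz] at this
  -- Vandermonde step
  have hsum : ∀ p : Fin N, ∑ k, (c k * a k ^ l₀) * ((a k ^ l₁) ^ (p : ℕ)) = 0 := by
    intro p
    have hD := hder p p.isLt
    have h1 := hzero (l₀ + (p : ℕ) * l₁)
    rw [key (l₀ + (p : ℕ) * l₁)] at h1
    have h2 : (∑ k, (c k * a k ^ l₀) * ((a k ^ l₁) ^ (p : ℕ))) *
        iteratedDeriv (l₀ + (p : ℕ) * l₁) φ 0 = 0 := by
      rw [Finset.sum_mul]
      calc ∑ k, (c k * a k ^ l₀) * ((a k ^ l₁) ^ (p : ℕ)) *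
            iteratedDeriv (l₀ + (p : ℕ) * l₁) φ 0
          = ∑ k, c k * (a k ^ (l₀ + (p : ℕ) * l₁) *
            iteratedDeriv (l₀ + (p : ℕ) * l₁) φ 0) := by
            refine Finset.sum_congr rfl fun k _ => ?_
            rw [pow_add, mul_comm (p : ℕ) l₁, pow_mul]
            ring
        _ = 0 := h1
    exact (mul_eq_zero.1 h2).resolve_right hD
  have hinj : Function.Injective (fun k => a k ^ l₁) := by
    intro i j hij
    exact ha_inj ((pow_left_inj₀ (ha_pos i).le (ha_pos j).le
      (Nat.one_le_iff_ne_zero.mp hl₁)).mp hij)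
  have hv : (fun k => c k * a k ^ l₀) = 0 :=
    Matrix.eq_zero_of_forall_pow_sum_mul_pow_eq_zero hinj hsum
  intro k
  have hk := congrFun hv k
  simp only [Pi.zero_apply] at hk
  have := pow_pos (ha_pos k) l₀
  exact (mul_eq_zero.1 hk).resolve_right this.ne'
end

section
/- If a finite real linear combination of the functions f_K² (products of squared sines as above) vanishes on some open subset of the orthotope R = ∏(0, μ_i π), then all coefficients are zero. -/
/-!
A real combination of the analytic functions `f_K²` that vanishes on an open set vanishes on all of
`ℝ^d` by the identity principle. Integrating it against `∏ᵢ cos (2 K₀ᵢ xᵢ / μᵢ)` over the box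
`∏ᵢ (0, μᵢ π]` splits, by Fubini, into one-dimensional integrals; writing
`sin² a cos 2b` as a sum of cosines of `2b`, `2(a + b)` and `2(a - b)` shows that each of these is
`-μᵢ π / 4` when `Kᵢ = K₀ᵢ` and `0` otherwise, so only the term `γ K₀` survives.
-/

open Set MeasureTheory Real

section

variable {ι : Type*} [Fintype ι]

noncomputable def sinProduct (μ : ι → ℝ) (K : ι → ℕ) (x : ι → ℝ) : ℝ :=
  ∏ i, sin (K i * x i / μ i)

theorem analyticAt_sinProduct (μ : ι → ℝ) (K : ι → ℕ) (x : ι → ℝ) :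
    AnalyticAt ℝ (sinProduct μ K) x :=
  Finset.analyticAt_fun_prod _ fun i _ => analyticAt_sin.comp <| (analyticAt_const.mul
    ((ContinuousLinearMap.proj (R := ℝ) (φ := fun _ : ι => ℝ) i).analyticAt x)).div_const

theorem sum_mul_sinProduct_sq_eq_zero_of_isOpen (μ : ι → ℝ) {U : Set (ι → ℝ)} (hU : IsOpen U)
    (hU_ne : U.Nonempty) (I : Finset (ι → ℕ)) (γ : (ι → ℕ) → ℝ)
    (hvan : ∀ x ∈ U, ∑ K ∈ I, γ K * sinProduct μ K x ^ 2 = 0) (x : ι → ℝ) :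
    ∑ K ∈ I, γ K * sinProduct μ K x ^ 2 = 0 := by
  obtain ⟨x₀, hx₀⟩ := hU_ne
  have hF : AnalyticOnNhd ℝ (fun x => ∑ K ∈ I, γ K * sinProduct μ K x ^ 2) univ := fun x _ =>
    Finset.analyticAt_fun_sum _ fun K _ =>
      analyticAt_const.mul ((analyticAt_sinProduct μ K x).pow 2)
  have hU₀ : (fun x => ∑ K ∈ I, γ K * sinProduct μ K x ^ 2) =ᶠ[nhds x₀] 0 :=
    Filter.eventually_of_mem (hU.mem_nhds hx₀) hvan
  exact congrFun (hF.eq_of_eventuallyEq analyticOnNhd_const hU₀) x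

theorem integral_cos_two_mul_intCast_mul_div {μ : ℝ} (hμ : μ ≠ 0) (m : ℤ) :
    ∫ t in (0 : ℝ)..μ * π, cos (2 * m * t / μ) = if m = 0 then μ * π else 0 := by
  split_ifs with hm
  · simp [hm]
  have hc : 2 * (m : ℝ) / μ ≠ 0 := by positivity
  have h := intervalIntegral.integral_comp_mul_left (a := 0) (b := μ * π) cos hc
  have harg (t : ℝ) : 2 * m * t / μ = 2 * m / μ * t := by ring
  have hend : 2 * (m : ℝ) / μ * (μ * π) = (2 * m : ℤ) * π := by push_cast; field_simp
  simp only [harg, h, mul_zero, integral_cos, sin_zero, sub_zero, hend, sin_int_mul_pi, smul_zero]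

theorem sin_sq_mul_cos_two_mul (a b : ℝ) :
    sin a ^ 2 * cos (2 * b) = cos (2 * b) / 2 - cos (2 * (a + b)) / 4 - cos (2 * (a - b)) / 4 := by
  rw [sin_sq_eq_half_sub, mul_add, mul_sub, cos_add, cos_sub]
  ring

theorem integral_sin_sq_mul_cos_two_mul_eq_ite {μ : ℝ} (hμ : μ ≠ 0) (k : ℕ) {k' : ℕ}
    (hk' : k' ≠ 0) :
    ∫ t in (0 : ℝ)..μ * π, sin (k * t / μ) ^ 2 * cos (2 * k' * t / μ) =
      if k = k' then -(μ * π / 4) else 0 := by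
  have hsum (t : ℝ) : sin (k * t / μ) ^ 2 * cos (2 * k' * t / μ) =
      cos (2 * ((k' : ℤ) : ℝ) * t / μ) / 2 - cos (2 * ((k + k' : ℤ) : ℝ) * t / μ) / 4
        - cos (2 * ((k - k' : ℤ) : ℝ) * t / μ) / 4 := by
    convert sin_sq_mul_cos_two_mul (k * t / μ) (k' * t / μ) using 3 <;> push_cast <;> ring_nf
  have hcos (m : ℤ) : IntervalIntegrable (fun t => cos (2 * m * t / μ)) volume 0 (μ * π) :=
    (continuous_cos.comp (by fun_prop)).intervalIntegrable _ _
  simp_rw [hsum]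
  rw [intervalIntegral.integral_sub (((hcos _).div_const _).sub ((hcos _).div_const _))
      ((hcos _).div_const _), intervalIntegral.integral_sub ((hcos _).div_const _)
      ((hcos _).div_const _)]
  simp only [intervalIntegral.integral_div, integral_cos_two_mul_intCast_mul_div hμ]
  split_ifs <;> first | omega | ring

theorem setIntegral_pi_Ioc_sinProduct_sq_mul_prod_cos {μ : ι → ℝ}
    (hμ : ∀ i, 0 < μ i) (K : ι → ℕ) {K' : ι → ℕ} (hK' : ∀ i, K' i ≠ 0) :
    ∫ x in univ.pi fun i => Ioc 0 (μ i * π),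
        sinProduct μ K x ^ 2 * ∏ i, cos (2 * K' i * x i / μ i) =
      ∏ i, if K i = K' i then -(μ i * π / 4) else 0 := by
  have hprod (x : ι → ℝ) : sinProduct μ K x ^ 2 * ∏ i, cos (2 * K' i * x i / μ i) =
      ∏ i, sin (K i * x i / μ i) ^ 2 * cos (2 * K' i * x i / μ i) := by
    rw [sinProduct, ← Finset.prod_pow, ← Finset.prod_mul_distrib]
  simp_rw [hprod, volume_pi, Measure.restrict_pi_pi]
  rw [integral_fintype_prod_eq_prod fun i t => sin (K i * t / μ i) ^ 2 * cos (2 * K' i * t / μ i)]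
  refine Finset.prod_congr rfl fun i _ => ?_
  rw [← intervalIntegral.integral_of_le (mul_pos (hμ i) pi_pos).le]
  exact integral_sin_sq_mul_cos_two_mul_eq_ite (hμ i).ne' _ (hK' i)

theorem setIntegral_pi_Ioc_sum_mul_sinProduct_sq_mul_prod_cos {μ : ι → ℝ} (hμ : ∀ i, 0 < μ i)
    (I : Finset (ι → ℕ)) (γ : (ι → ℕ) → ℝ) {K₀ : ι → ℕ} (hK₀ : K₀ ∈ I) (hK₀_ne : ∀ i, K₀ i ≠ 0) :
    ∫ x in univ.pi fun i => Ioc 0 (μ i * π),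
        (∑ K ∈ I, γ K * sinProduct μ K x ^ 2) * ∏ i, cos (2 * K₀ i * x i / μ i) =
      γ K₀ * ∏ i, -(μ i * π / 4) := by
  have hint (K : ι → ℕ) : IntegrableOn (fun x => sinProduct μ K x ^ 2 *
      ∏ i, cos (2 * K₀ i * x i / μ i)) (univ.pi fun i => Ioc 0 (μ i * π)) := by
    have hcont : Continuous fun x => sinProduct μ K x ^ 2 * ∏ i, cos (2 * K₀ i * x i / μ i) := by
      unfold sinProduct
      fun_prop
    refine (hcont.integrableOn_Icc (a := 0) (b := fun i => μ i * π)).mono_set ?_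
    rw [← pi_univ_Icc]
    exact pi_mono fun i _ => Ioc_subset_Icc_self
  simp_rw [Finset.sum_mul, mul_assoc (γ _)]
  rw [integral_finsetSum _ fun K _ => (hint K).const_mul _]
  simp_rw [integral_const_mul, setIntegral_pi_Ioc_sinProduct_sq_mul_prod_cos hμ _ hK₀_ne,
    Fintype.prod_ite_zero]
  simp only [← funext_iff, mul_ite, mul_zero, Finset.sum_ite_eq', if_pos hK₀]

end

theorem squared_eigenfunctions_linear_independent_on_open_subset_general
    (d : ℕ) (μ : Fin d → ℝ) (hμ : ∀ i, 0 < μ i)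
    (U : Set (Fin d → ℝ)) (hU_open : IsOpen U) (hU_ne : U.Nonempty)
    (I : Finset (Fin d → ℕ)) (hI : ∀ K ∈ I, ∀ i, 1 ≤ K i)
    (γ : (Fin d → ℕ) → ℝ)
    (hvan : ∀ x ∈ U,
      ∑ K ∈ I, γ K * (∏ i, Real.sin ((K i : ℝ) * x i / μ i)) ^ 2 = 0) :
    ∀ K ∈ I, γ K = 0 := by
  intro K₀ hK₀
  have hzero := sum_mul_sinProduct_sq_eq_zero_of_isOpen μ hU_open hU_ne I γ hvan
  have hpair := setIntegral_pi_Ioc_sum_mul_sinProduct_sq_mul_prod_cos hμ I γ hK₀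
    fun i => Nat.one_le_iff_ne_zero.1 (hI K₀ hK₀ i)
  simp only [hzero, zero_mul, integral_zero] at hpair
  have hne : ∏ i, -(μ i * π / 4) ≠ 0 :=
    Finset.prod_ne_zero_iff.2 fun i _ => neg_ne_zero.2 (by have := hμ i; positivity)
  exact (mul_eq_zero.1 hpair.symm).resolve_right hne

theorem squared_eigenfunctions_linear_independent_on_open_subset
    (d : ℕ) (μ : Fin d → ℝ) (hμ : ∀ i, 0 < μ i)
    (U : Set (Fin d → ℝ)) (hU_open : IsOpen U) (hU_ne : U.Nonempty)
    (hU_sub : U ⊆ {x | ∀ i, x i ∈ Ioo (0 : ℝ) (μ i * Real.pi)})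
    (I : Finset (Fin d → ℕ)) (hI : ∀ K ∈ I, ∀ i, 1 ≤ K i)
    (γ : (Fin d → ℕ) → ℝ)
    (hvan : ∀ x ∈ U,
      ∑ K ∈ I, γ K * (∏ i, Real.sin ((K i : ℝ) * x i / μ i)) ^ 2 = 0) :
    ∀ K ∈ I, γ K = 0 :=
  squared_eigenfunctions_linear_independent_on_open_subset_general d μ hμ U hU_open hU_ne I hI γ
    hvan
end

section
/- Let a₁,…,a_N be pairwise distinct positive reals and suppose γ₁,…,γ_N ∈ ℝ satisfy ∑_{k=1}^N γ_k sin²(a_k x) = 0 for all x in some interval (0, ε) with ε > 0. Then γ₁ = ⋯ = γ_N = 0. -/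
/-! Write `sin² (a x) = (1 - cos (b x)) / 2` with `b = 2a`, so that `∑ γₖ cos (bₖ x)` is constant
on `(0, ε)`. Differentiating twice multiplies each term by `-bₖ²`, hence at any point `x₀` of the
interval `∑ γₖ bₖ sin (bₖ x₀) (bₖ²)ᵐ = 0` and `∑ γₖ bₖ² cos (bₖ x₀) (bₖ²)ᵐ = 0` for all `m`.
The `bₖ²` are distinct, so the Vandermonde matrix is invertible and
`γₖ cos (bₖ x₀) = γₖ sin (bₖ x₀) = 0`, whence `γₖ = 0`. -/

open Set Function Real

theorem eq_zero_of_forall_sum_mul_pow_eq_zero {R : Type*} [CommRing R] [IsDomain R] {N : ℕ}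
    {c δ : Fin N → R} (hc : Injective c) (h : ∀ m < N, ∑ k, δ k * c k ^ m = 0) : δ = 0 :=
  Matrix.eq_zero_of_vecMul_eq_zero (Matrix.det_vandermonde_ne_zero_iff.mpr hc) <|
    funext fun j => h j j.isLt

theorem HasDerivAt.eq_zero_of_eqOn_const {f f' : ℝ → ℝ} {U : Set ℝ} {C : ℝ} (hU : IsOpen U)
    (hf : ∀ x, HasDerivAt f (f' x) x) (hC : ∀ x ∈ U, f x = C) : ∀ x ∈ U, f' x = 0 :=
  fun x hx => (hf x).unique <|
    (hasDerivAt_const x C).congr_of_eventuallyEq (Filter.eventually_of_mem (hU.mem_nhds hx) hC)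

section DilateSums

variable {ι : Type*} [Fintype ι] (w b : ι → ℝ)

theorem hasDerivAt_sum_mul_cos_mul (x : ℝ) :
    HasDerivAt (fun y => ∑ k, w k * cos (b k * y)) (-∑ k, w k * b k * sin (b k * x)) x := by
  rw [← Finset.sum_neg_distrib]
  exact HasDerivAt.fun_sum fun k _ =>
    ((((hasDerivAt_id' x).const_mul (b k)).cos).const_mul (w k)).congr_deriv (by ring)

theorem hasDerivAt_sum_mul_sin_mul (x : ℝ) :
    HasDerivAt (fun y => ∑ k, w k * sin (b k * y)) (∑ k, w k * b k * cos (b k * x)) x :=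
  HasDerivAt.fun_sum fun k _ =>
    ((((hasDerivAt_id' x).const_mul (b k)).sin).const_mul (w k)).congr_deriv (by ring)

variable {w b} {U : Set ℝ}

theorem sum_mul_sin_eq_zero_of_sum_mul_cos_eq_const (hU : IsOpen U) {C : ℝ}
    (h : ∀ x ∈ U, ∑ k, w k * cos (b k * x) = C) : ∀ x ∈ U, ∑ k, w k * b k * sin (b k * x) = 0 :=
  fun x hx => neg_eq_zero.mp <|
    HasDerivAt.eq_zero_of_eqOn_const hU (hasDerivAt_sum_mul_cos_mul w b) h x hx

theorem sum_mul_cos_eq_zero_of_sum_mul_sin_eq_zero (hU : IsOpen U)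
    (h : ∀ x ∈ U, ∑ k, w k * sin (b k * x) = 0) : ∀ x ∈ U, ∑ k, w k * b k * cos (b k * x) = 0 :=
  HasDerivAt.eq_zero_of_eqOn_const hU (hasDerivAt_sum_mul_sin_mul w b) h

theorem sum_mul_pow_mul_sin_eq_zero_of_sum_mul_cos_eq_const (hU : IsOpen U) {C : ℝ}
    (h : ∀ x ∈ U, ∑ k, w k * cos (b k * x) = C) (m : ℕ) :
    ∀ x ∈ U, ∑ k, w k * b k ^ (2 * m + 1) * sin (b k * x) = 0 := by
  induction m with
  | zero => simpa using sum_mul_sin_eq_zero_of_sum_mul_cos_eq_const hU h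
  | succ m ih =>
    have hcos := sum_mul_cos_eq_zero_of_sum_mul_sin_eq_zero hU ih
    have hsin := sum_mul_sin_eq_zero_of_sum_mul_cos_eq_const hU hcos
    intro x hx
    simpa only [mul_assoc, ← pow_succ, Nat.mul_succ] using hsin x hx

theorem eq_zero_of_sum_mul_cos_mul_eq_const {N : ℕ} {γ b : Fin N → ℝ} (hb_pos : ∀ k, 0 < b k)
    (hb : Injective b) (hU : IsOpen U) (hU_ne : U.Nonempty) {C : ℝ}
    (h : ∀ x ∈ U, ∑ k, γ k * cos (b k * x) = C) : γ = 0 := by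
  obtain ⟨x₀, hx₀⟩ := hU_ne
  have hsq : Injective fun k => b k ^ 2 := fun i j hij =>
    hb <| (pow_left_inj₀ (hb_pos i).le (hb_pos j).le two_ne_zero).mp hij
  have hsin := eq_zero_of_forall_sum_mul_pow_eq_zero (δ := fun k => γ k * b k * sin (b k * x₀))
    hsq fun m _ => by
      rw [← sum_mul_pow_mul_sin_eq_zero_of_sum_mul_cos_eq_const hU h m x₀ hx₀]
      exact Finset.sum_congr rfl fun k _ => by ring
  have hcos := eq_zero_of_forall_sum_mul_pow_eq_zero
    (δ := fun k => γ k * b k ^ 2 * cos (b k * x₀)) hsq fun m _ => by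
      rw [← sum_mul_cos_eq_zero_of_sum_mul_sin_eq_zero hU
        (sum_mul_pow_mul_sin_eq_zero_of_sum_mul_cos_eq_const hU h m) x₀ hx₀]
      exact Finset.sum_congr rfl fun k _ => by ring
  funext k
  rw [Pi.zero_apply]
  have hbk := (hb_pos k).ne'
  have hs : γ k * sin (b k * x₀) = 0 := by simpa [hbk] using congrFun hsin k
  have hc : γ k * cos (b k * x₀) = 0 := by simpa [hbk] using congrFun hcos k
  linear_combination sin (b k * x₀) * hs + cos (b k * x₀) * hc - γ k * sin_sq_add_cos_sq (b k * x₀)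

end DilateSums

theorem sin_sq_dilates_vanishing_coeffs_zero
    (N : ℕ) (a : Fin N → ℝ)
    (ha_pos : ∀ k, 0 < a k) (ha_inj : Function.Injective a)
    (γ : Fin N → ℝ) (ε : ℝ) (hε : 0 < ε)
    (hvan : ∀ x ∈ Ioo (0 : ℝ) ε, ∑ k, γ k * Real.sin (a k * x) ^ 2 = 0) :
    ∀ k, γ k = 0 := by
  have hcos : ∀ x ∈ Ioo (0 : ℝ) ε, ∑ k, γ k * cos (2 * a k * x) = ∑ k, γ k := by
    intro x hx
    have hterm (k : Fin N) : γ k * sin (a k * x) ^ 2 = γ k / 2 - γ k * cos (2 * a k * x) / 2 := by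
      rw [sin_sq_eq_half_sub]; ring_nf
    have hsum := hvan x hx
    rw [Finset.sum_congr rfl fun k _ => hterm k, Finset.sum_sub_distrib, ← Finset.sum_div,
      ← Finset.sum_div] at hsum
    linarith
  have h2a_inj : Injective fun k => 2 * a k := fun i j hij => ha_inj <| by simpa using hij
  exact congrFun <| eq_zero_of_sum_mul_cos_mul_eq_const (fun k => by linarith [ha_pos k])
    h2a_inj isOpen_Ioo (nonempty_Ioo.mpr hε) hcos
end

section
/- Let f : ℝ → ℝ be given by f(x) = sin(x)/x for x ≠ 0 and f(0) = 1, and let a₁,…,a_N be pairwise distinct positive reals. Then x ↦ f(a₁x), …, x ↦ f(a_N x) are linearly independent on every interval (0, ε). -/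
/-!
Multiplying by `x`, the relation `∑ cₖ sinc (aₖ x) = 0` on `(0, ε)` becomes
`∑ (cₖ / aₖ) sin (aₖ x) = 0`, which is analytic and hence vanishes on all of `ℝ`. Its `(2p+1)`-st
derivative at `0` is `(-1)ᵖ ∑ cₖ (aₖ²)ᵖ`, so the vector `c` is killed by the Vandermonde matrix of
the distinct nodes `aₖ²`.
-/

open Set Real

lemma iteratedDeriv_odd_sin_const_mul_zero (a : ℝ) (p : ℕ) :
    iteratedDeriv (2 * p + 1) (fun x => sin (a * x)) 0 = (-1) ^ p * a ^ (2 * p + 1) := by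
  rw [iteratedDeriv_comp_const_mul contDiff_sin, iteratedDeriv_odd_sin]
  simp [mul_comm]

lemma sum_mul_pow_eq_zero_of_sum_sin_eq_zero {ι : Type*} (s : Finset ι) (d a : ι → ℝ)
    (h : ∀ x, ∑ k ∈ s, d k * sin (a k * x) = 0) (p : ℕ) :
    ∑ k ∈ s, d k * a k ^ (2 * p + 1) = 0 := by
  have hderiv := congrArg (iteratedDeriv (2 * p + 1) · 0) (funext h)
  rw [iteratedDeriv_fun_sum (fun k _ => by fun_prop)] at hderiv
  simp only [iteratedDeriv_const_mul_field, iteratedDeriv_odd_sin_const_mul_zero,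
    iteratedDeriv_const, Nat.add_one_ne_zero, if_false, mul_left_comm (d _),
    ← Finset.mul_sum] at hderiv
  exact (mul_eq_zero.1 hderiv).resolve_left (by simp)

lemma sum_sin_eq_zero_of_forall_mem_Ioo {ι : Type*} (s : Finset ι) (d a : ι → ℝ) {ε : ℝ}
    (hε : 0 < ε) (h : ∀ x ∈ Ioo 0 ε, ∑ k ∈ s, d k * sin (a k * x) = 0) (x : ℝ) :
    ∑ k ∈ s, d k * sin (a k * x) = 0 := by
  have hanalytic : AnalyticOnNhd ℝ (fun x => ∑ k ∈ s, d k * sin (a k * x)) univ :=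
    fun _ _ => Finset.analyticAt_fun_sum _ fun k _ => by fun_prop
  refine hanalytic.eqOn_zero_of_preconnected_of_eventuallyEq_zero isPreconnected_univ
    (mem_univ (ε / 2)) ?_ (mem_univ x)
  filter_upwards [Ioo_mem_nhds (half_pos hε) (half_lt_self hε)] using h

lemma mul_sum_sinc_eq_sum_sin {ι : Type*} (s : Finset ι) (c a : ι → ℝ) (ha : ∀ k ∈ s, a k ≠ 0)
    {x : ℝ} (hx : x ≠ 0) :
    x * ∑ k ∈ s, c k * sinc (a k * x) = ∑ k ∈ s, c k / a k * sin (a k * x) := by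
  rw [Finset.mul_sum]
  refine Finset.sum_congr rfl fun k hk => ?_
  rw [sinc_of_ne_zero (mul_ne_zero (ha k hk) hx)]
  field_simp [ha k hk]

theorem eq_zero_of_sum_mul_sinc_dilate_eq_zero {N : ℕ} {a : Fin N → ℝ} (ha_pos : ∀ k, 0 < a k)
    (ha_inj : Function.Injective a) {ε : ℝ} (hε : 0 < ε) {c : Fin N → ℝ}
    (hc : ∀ x ∈ Ioo 0 ε, ∑ k, c k * sinc (a k * x) = 0) : c = 0 := by
  have hsin : ∀ x, ∑ k, c k / a k * sin (a k * x) = 0 :=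
    sum_sin_eq_zero_of_forall_mem_Ioo _ _ _ hε fun x hx => by
      rw [← mul_sum_sinc_eq_sum_sin _ _ _ (fun k _ => (ha_pos k).ne') hx.1.ne', hc x hx, mul_zero]
  have hsq_inj : Function.Injective (a · ^ 2) := fun i j hij =>
    ha_inj ((sq_eq_sq₀ (ha_pos i).le (ha_pos j).le).1 hij)
  refine Matrix.eq_zero_of_forall_pow_sum_mul_pow_eq_zero hsq_inj fun p => ?_
  rw [← sum_mul_pow_eq_zero_of_sum_sin_eq_zero _ _ _ hsin p]
  refine Finset.sum_congr rfl fun k _ => ?_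
  field_simp [(ha_pos k).ne']
  ring

theorem sinc_dilates_linear_independent
    (f : ℝ → ℝ) (hf : ∀ x : ℝ, f x = if x = 0 then 1 else Real.sin x / x)
    (N : ℕ) (a : Fin N → ℝ)
    (ha_pos : ∀ k, 0 < a k) (ha_inj : Function.Injective a) :
    ∀ ε > (0 : ℝ), ∀ c : Fin N → ℝ,
      (∀ x ∈ Ioo (0 : ℝ) ε, ∑ k, c k * f (a k * x) = 0) →
      ∀ k, c k = 0 := by
  obtain rfl : f = sinc := funext hf
  intro ε hε c hc
  exact congrFun (eq_zero_of_sum_mul_sinc_dilate_eq_zero ha_pos ha_inj hε hc)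
end
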